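/- arXiv:2602.08942 — 2 statements merged into one kernel-verified Lean document; each statement's English description precedes it below -/
import Mathlib

section
/- Let A be a commutative ring, x ∈ A, and n ≥ 1. Let T be the chain complex of A-modules concentrated in degrees 2, 1, 0 given by A →d₂→ A ⊕ A →d₁→ A with d₂(a) = (x·a, −xⁿ·a) and d₁(a, b) = xⁿ·a + x·b. Then T is isomorphic, as a chain complex of A-modules, to the direct sum K(x) ⊕ K(x)[1], where K(x) denotes the chain complex of A-modules with A in degrees 1 and 0 and differential given by multiplication by x, and [1] denotes the shift. -/
open CategoryTheory

noncomputable section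

variable (A : Type) [CommRing A]

/-- The underlying graded object of the two-term Koszul complex `K(x)`:
a copy of `A` in (homological) degrees `1` and `0`, and zero elsewhere. -/
def KoszulX : ℕ → ModuleCat A
  | 0 => ModuleCat.of A A
  | 1 => ModuleCat.of A A
  | _ => ModuleCat.of A PUnit

/-- The differentials of `K(x)`: multiplication by `x` from degree `1` to degree `0`,
and zero elsewhere. -/
def KoszulD (x : A) : ∀ n : ℕ, KoszulX A (n + 1) ⟶ KoszulX A n
  | 0 => ModuleCat.ofHom (LinearMap.lsmul A A x)
  | _ + 1 => 0

/-- The chain complex `K(x)` of `A`-modules, with `A` in degrees `1` and `0` and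
differential given by multiplication by `x`. -/
def Koszul (x : A) : ChainComplex (ModuleCat A) ℕ :=
  ChainComplex.of (KoszulX A) (KoszulD A x)
    (fun n => by
      match n with
      | 0 => exact Limits.zero_comp
      | n + 1 => exact Limits.zero_comp)

/-- The shift (suspension) `C[1]` of an `ℕ`-indexed chain complex:
`(C[1])₀ = 0`, `(C[1])_{n+1} = C_n`, with differentials negated. -/
def shiftOne (C : ChainComplex (ModuleCat A) ℕ) : ChainComplex (ModuleCat A) ℕ :=
  ChainComplex.of
    (fun n => match n with
      | 0 => ModuleCat.of A PUnit
      | n + 1 => C.X n)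
    (fun n => match n with
      | 0 => 0
      | n + 1 => -C.d (n + 1) n)
    (fun n => by
      match n with
      | 0 => exact Limits.comp_zero
      | n + 1 =>
        show (-C.d (n + 2) (n + 1)) ≫ (-C.d (n + 1) n) = 0
        simp)

/-- The graded object of the complex `T`: `A` in degrees `2` and `0`,
`A ⊕ A` in degree `1`, and zero elsewhere. -/
def TX : ℕ → ModuleCat A
  | 0 => ModuleCat.of A A
  | 1 => ModuleCat.of A (A × A)
  | 2 => ModuleCat.of A A
  | _ => ModuleCat.of A PUnit

/-- The differentials of `T`: `d₂ a = (x * a, -xⁿ * a)` and `d₁ (a, b) = xⁿ * a + x * b`. -/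
def TD (x : A) (n : ℕ) : ∀ i : ℕ, TX A (i + 1) ⟶ TX A i
  | 0 => ModuleCat.ofHom
      ((LinearMap.lsmul A A (x ^ n)).comp (LinearMap.fst A A A) +
        (LinearMap.lsmul A A x).comp (LinearMap.snd A A A))
  | 1 => ModuleCat.ofHom
      (LinearMap.prod (LinearMap.lsmul A A x) (-(LinearMap.lsmul A A (x ^ n))))
  | 2 => 0
  | _ + 3 => 0

/-- The chain complex `T`, concentrated in degrees `2`, `1`, `0`:
`A → A ⊕ A → A` with `d₂ a = (x * a, -xⁿ * a)` and `d₁ (a, b) = xⁿ * a + x * b`;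
it is a model for the tensor product `A⫽xⁿ ⊗_A A⫽x`. -/
def Tcplx (x : A) (n : ℕ) : ChainComplex (ModuleCat A) ℕ :=
  ChainComplex.of (TX A) (TD A x n)
    (fun i => by
      match i with
      | 0 =>
        have key : ((LinearMap.lsmul A A (x ^ n)).comp (LinearMap.fst A A A) +
              (LinearMap.lsmul A A x).comp (LinearMap.snd A A A)).comp
              (LinearMap.prod (LinearMap.lsmul A A x) (-(LinearMap.lsmul A A (x ^ n)))) = 0 := by
          ext
          simp
          ring
        exact ModuleCat.hom_ext key
      | 1 => exact Limits.zero_comp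
      | i + 2 => exact Limits.zero_comp)

namespace TcplxAux

variable (x : A) (n : ℕ)

/-- Projection `T ⟶ K(x)`. -/
def pmap (hn : 1 ≤ n) : Tcplx A x n ⟶ Koszul A x where
  f i := match i with
    | 0 => ModuleCat.ofHom LinearMap.id
    | 1 => ModuleCat.ofHom
        ((LinearMap.lsmul A A (x ^ (n - 1))).comp (LinearMap.fst A A A) + LinearMap.snd A A A)
    | _ + 2 => 0
  comm' i j hij := by
    obtain rfl : i = j + 1 := hij.symm
    have hx : x ^ (n - 1) * x = x ^ n := by rw [← pow_succ]; congr 1; omega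
    match j with
    | 0 =>
      refine ModuleCat.hom_ext (LinearMap.ext fun (ab : A × A) => ?_)
      obtain ⟨a, b⟩ := ab
      show x * (x ^ (n - 1) * (a : A) + (b : A)) = x ^ n * a + x * b
      rw [← hx]; ring
    | 1 =>
      refine ModuleCat.hom_ext (LinearMap.ext fun (a : A) => ?_)
      show (0 : A) = x ^ (n - 1) * (x * (a : A)) + -(x ^ n * a)
      rw [← hx]; ring
    | j + 2 =>
      apply ModuleCat.hom_ext; apply LinearMap.ext; intro m; exact @Subsingleton.elim PUnit _ _ _

/-- Projection `T ⟶ K(x)[1]`. -/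
def qmap : Tcplx A x n ⟶ shiftOne A (Koszul A x) where
  f i := match i with
    | 0 => 0
    | 1 => ModuleCat.ofHom (LinearMap.fst A A A)
    | 2 => ModuleCat.ofHom (-LinearMap.id)
    | _ + 3 => 0
  comm' i j hij := by
    obtain rfl : i = j + 1 := hij.symm
    match j with
    | 0 =>
      apply ModuleCat.hom_ext; apply LinearMap.ext; intro m; exact @Subsingleton.elim PUnit _ _ _
    | 1 =>
      refine ModuleCat.hom_ext (LinearMap.ext fun (a : A) => ?_)
      show -(x * -(a : A)) = x * a
      ring
    | j + 2 =>
      apply ModuleCat.hom_ext; apply LinearMap.ext; intro m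
      obtain rfl : m = 0 := @Subsingleton.elim PUnit _ _ _
      rw [map_zero, map_zero]

/-- Inclusion `K(x) ⟶ T`. -/
def umap : Koszul A x ⟶ Tcplx A x n where
  f i := match i with
    | 0 => ModuleCat.ofHom LinearMap.id
    | 1 => ModuleCat.ofHom (LinearMap.prod 0 LinearMap.id)
    | _ + 2 => 0
  comm' i j hij := by
    obtain rfl : i = j + 1 := hij.symm
    match j with
    | 0 =>
      refine ModuleCat.hom_ext (LinearMap.ext fun (a : A) => ?_)
      show x ^ n * 0 + x * (a : A) = x * a
      ring
    | 1 =>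
      apply ModuleCat.hom_ext; apply LinearMap.ext; intro m
      obtain rfl : m = 0 := @Subsingleton.elim PUnit _ _ _
      rw [map_zero, map_zero]
    | j + 2 =>
      apply ModuleCat.hom_ext; apply LinearMap.ext; intro m
      obtain rfl : m = 0 := @Subsingleton.elim PUnit _ _ _
      rw [map_zero, map_zero]

/-- Inclusion `K(x)[1] ⟶ T`. -/
def vmap (hn : 1 ≤ n) : shiftOne A (Koszul A x) ⟶ Tcplx A x n where
  f i := match i with
    | 0 => 0
    | 1 => ModuleCat.ofHom (LinearMap.prod LinearMap.id (-(LinearMap.lsmul A A (x ^ (n - 1)))))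
    | 2 => ModuleCat.ofHom (-LinearMap.id)
    | _ + 3 => 0
  comm' i j hij := by
    obtain rfl : i = j + 1 := hij.symm
    have hx : x ^ (n - 1) * x = x ^ n := by rw [← pow_succ]; congr 1; omega
    match j with
    | 0 =>
      refine ModuleCat.hom_ext (LinearMap.ext fun (a : A) => ?_)
      show x ^ n * (a : A) + x * -(x ^ (n - 1) * a) = 0
      rw [← hx]; ring
    | 1 =>
      refine ModuleCat.hom_ext (LinearMap.ext fun (a : A) => ?_)
      apply Prod.ext
      · show x * -(a : A) = -(x * a)
        ring
      · show -(x ^ n * -(a : A)) = -(x ^ (n - 1) * -(x * a))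
        rw [← hx]; ring
    | j + 2 =>
      apply ModuleCat.hom_ext; apply LinearMap.ext; intro m
      obtain rfl : m = 0 := @Subsingleton.elim PUnit _ _ _
      rw [map_zero, map_zero]

variable (hn : 1 ≤ n)

theorem up_eq : umap A x n ≫ pmap A x n hn = 𝟙 (Koszul A x) := by
  apply HomologicalComplex.hom_f_injective
  funext i
  match i with
  | 0 =>
    exact ModuleCat.hom_ext (LinearMap.ext fun (a : A) => rfl)
  | 1 =>
    refine ModuleCat.hom_ext (LinearMap.ext fun (a : A) => ?_)
    show x ^ (n - 1) * 0 + (a : A) = a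
    ring
  | i + 2 => apply ModuleCat.hom_ext; apply LinearMap.ext; intro m; exact @Subsingleton.elim PUnit _ _ _

theorem uq_eq : umap A x n ≫ qmap A x n = 0 := by
  apply HomologicalComplex.hom_f_injective
  funext i
  match i with
  | 0 => apply ModuleCat.hom_ext; apply LinearMap.ext; intro m; exact @Subsingleton.elim PUnit _ _ _
  | 1 => exact ModuleCat.hom_ext (LinearMap.ext fun (a : A) => rfl)
  | i + 2 =>
    apply ModuleCat.hom_ext; apply LinearMap.ext; intro m
    obtain rfl : m = 0 := @Subsingleton.elim PUnit _ _ _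
    rw [map_zero, map_zero]

theorem vp_eq : vmap A x n hn ≫ pmap A x n hn = 0 := by
  apply HomologicalComplex.hom_f_injective
  funext i
  match i with
  | 0 =>
    apply ModuleCat.hom_ext; apply LinearMap.ext; intro m
    obtain rfl : m = 0 := @Subsingleton.elim PUnit _ _ _
    rw [map_zero, map_zero]
  | 1 =>
    refine ModuleCat.hom_ext (LinearMap.ext fun (a : A) => ?_)
    show x ^ (n - 1) * (a : A) + -(x ^ (n - 1) * a) = 0
    ring
  | i + 2 => apply ModuleCat.hom_ext; apply LinearMap.ext; intro m; exact @Subsingleton.elim PUnit _ _ _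

theorem vq_eq : vmap A x n hn ≫ qmap A x n = 𝟙 (shiftOne A (Koszul A x)) := by
  apply HomologicalComplex.hom_f_injective
  funext i
  match i with
  | 0 => apply ModuleCat.hom_ext; apply LinearMap.ext; intro m; exact @Subsingleton.elim PUnit _ _ _
  | 1 => exact ModuleCat.hom_ext (LinearMap.ext fun (a : A) => rfl)
  | 2 =>
    refine ModuleCat.hom_ext (LinearMap.ext fun (a : A) => ?_)
    show - -(a : A) = a
    ring
  | i + 3 => apply ModuleCat.hom_ext; apply LinearMap.ext; intro m; exact @Subsingleton.elim PUnit _ _ _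

theorem total_eq :
    pmap A x n hn ≫ umap A x n + qmap A x n ≫ vmap A x n hn = 𝟙 (Tcplx A x n) := by
  apply HomologicalComplex.hom_f_injective
  funext i
  match i with
  | 0 =>
    refine ModuleCat.hom_ext (LinearMap.ext fun (a : A) => ?_)
    show (a : A) + 0 = a
    ring
  | 1 =>
    refine ModuleCat.hom_ext (LinearMap.ext fun (ab : A × A) => ?_)
    obtain ⟨a, b⟩ := ab
    apply Prod.ext
    · show (0 : A) + (a : A) = a
      ring
    · show x ^ (n - 1) * (a : A) + (b : A) + -(x ^ (n - 1) * a) = b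
      ring
  | 2 =>
    refine ModuleCat.hom_ext (LinearMap.ext fun (a : A) => ?_)
    show (0 : A) + - -(a : A) = a
    ring
  | i + 3 => apply ModuleCat.hom_ext; apply LinearMap.ext; intro m; exact @Subsingleton.elim PUnit _ _ _

end TcplxAux

/-- The complex `T` (a model for `A⫽xⁿ ⊗_A A⫽x`) is isomorphic, as a chain complex of
`A`-modules, to the direct sum `K(x) ⊕ K(x)[1]` of the two-term Koszul complex `K(x)`
and its shift. -/
theorem Tcplx_iso_koszul_biprod_shift (x : A) (n : ℕ) (hn : 1 ≤ n) :
    Nonempty (Tcplx A x n ≅ Koszul A x ⊞ shiftOne A (Koszul A x)) := by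
  open TcplxAux in
  refine ⟨{
    hom := Limits.biprod.lift (pmap A x n hn) (qmap A x n)
    inv := Limits.biprod.desc (umap A x n) (vmap A x n hn)
    hom_inv_id := ?_
    inv_hom_id := ?_ }⟩
  · rw [Limits.biprod.lift_desc, total_eq]
  · apply Limits.biprod.hom_ext'
    · rw [← Category.assoc, Limits.biprod.inl_desc, Category.comp_id]
      apply Limits.biprod.hom_ext
      · rw [Category.assoc, Limits.biprod.lift_fst, up_eq, Limits.biprod.inl_fst]
      · rw [Category.assoc, Limits.biprod.lift_snd, uq_eq, Limits.biprod.inl_snd]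
    · rw [← Category.assoc, Limits.biprod.inr_desc, Category.comp_id]
      apply Limits.biprod.hom_ext
      · rw [Category.assoc, Limits.biprod.lift_fst, vp_eq, Limits.biprod.inr_fst]
      · rw [Category.assoc, Limits.biprod.lift_snd, vq_eq, Limits.biprod.inr_snd]

end
end

section
/- Let A be a commutative ring, x ∈ A, and n ≥ 1. Let Z ⊆ A × A be the A-submodule {(a, b) : xⁿ·a + x·b = 0} and let B ⊆ A × A be the A-submodule {(x·a, −xⁿ·a) : a ∈ A}. Then B ⊆ Z, and the quotient A-module Z/B is isomorphic to the product (A/xA) × {a ∈ A : x·a = 0} of the quotient of A by the ideal generated by x and the x-torsion submodule of A. -/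
/-- Let `A` be a commutative ring, `x ∈ A` and `n ≥ 1`.  Let
`Z = {(a, b) : xⁿ·a + x·b = 0} ⊆ A × A` and `B = {(x·a, −xⁿ·a) : a ∈ A} ⊆ A × A`
(as `A`-submodules of `A × A`), and let `T = {a ∈ A : x·a = 0}` be the `x`-torsion
submodule of `A`.  Then `B ⊆ Z`, and the quotient `A`-module `Z/B` is isomorphic to
the product `(A/xA) × T` of the quotient of `A` by the ideal generated by `x` and the
`x`-torsion submodule of `A`. -/
theorem quotient_cycles_boundaries_iso (A : Type*) [CommRing A] (x : A) (n : ℕ)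
    (hn : 1 ≤ n)
    (Z : Submodule A (A × A)) (hZ : ∀ p : A × A, p ∈ Z ↔ x ^ n * p.1 + x * p.2 = 0)
    (B : Submodule A (A × A)) (hB : ∀ p : A × A, p ∈ B ↔ ∃ a : A, p = (x * a, -(x ^ n * a)))
    (T : Submodule A A) (hT : ∀ a : A, a ∈ T ↔ x * a = 0) :
    B ≤ Z ∧
      Nonempty ((Z ⧸ B.comap Z.subtype) ≃ₗ[A] (A ⧸ Ideal.span {x}) × T) := by
  have hx : x * x ^ (n - 1) = x ^ n := by
    rw [← pow_succ']
    congr 1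
    omega
  have hBZ : B ≤ Z := by
    intro p hp
    rcases (hB p).1 hp with ⟨a, rfl⟩
    rw [hZ]
    ring_nf
  refine ⟨hBZ, ?_⟩
  have key : ∀ z : Z, x * (x ^ (n - 1) * (z : A × A).1 + (z : A × A).2) = 0 := by
    intro z
    have := (hZ (z : A × A)).1 z.2
    rw [mul_add, ← mul_assoc, hx]
    exact this
  let f1 : Z →ₗ[A] (A ⧸ Ideal.span {x}) :=
    (Ideal.span {x}).mkQ ∘ₗ (LinearMap.fst A A A) ∘ₗ Z.subtype
  let l : Z →ₗ[A] A :=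
    x ^ (n - 1) • ((LinearMap.fst A A A) ∘ₗ Z.subtype) + (LinearMap.snd A A A) ∘ₗ Z.subtype
  have hl : ∀ z : Z, l z = x ^ (n - 1) * (z : A × A).1 + (z : A × A).2 := fun z => rfl
  let f2 : Z →ₗ[A] T := l.codRestrict T (fun z => (hT _).2 (by rw [hl]; exact key z))
  let f : Z →ₗ[A] (A ⧸ Ideal.span {x}) × T := f1.prod f2
  have hf : ∀ z : Z, f z = (Submodule.Quotient.mk (z : A × A).1,
      ⟨x ^ (n - 1) * (z : A × A).1 + (z : A × A).2, (hT _).2 (key z)⟩) := fun z => rfl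
  have hle : B.comap Z.subtype ≤ LinearMap.ker f := by
    intro z hz
    rcases (hB _).1 hz with ⟨a, ha⟩
    have h1 : (z : A × A).1 = x * a := congrArg Prod.fst ha
    have h2 : (z : A × A).2 = -(x ^ n * a) := congrArg Prod.snd ha
    rw [LinearMap.mem_ker, hf]
    refine Prod.ext ?_ (Subtype.ext ?_)
    · simp only [h1]
      exact (Submodule.Quotient.mk_eq_zero _).2 (Ideal.mem_span_singleton.2 ⟨a, rfl⟩)
    · show x ^ (n - 1) * (z : A × A).1 + (z : A × A).2 = 0
      rw [h1, h2, ← mul_assoc, mul_comm (x ^ (n - 1)) x, hx]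
      ring
  have hker : LinearMap.ker f ≤ B.comap Z.subtype := by
    intro z hz
    rw [LinearMap.mem_ker, hf, Prod.ext_iff] at hz
    obtain ⟨h1, h2⟩ := hz
    simp only [Prod.fst_zero, Prod.snd_zero] at h1 h2
    rw [Submodule.Quotient.mk_eq_zero] at h1
    obtain ⟨a, ha⟩ := Ideal.mem_span_singleton.1 h1
    have h2' : x ^ (n - 1) * (z : A × A).1 + (z : A × A).2 = 0 := congrArg Subtype.val h2
    have hb : (z : A × A).2 = -(x ^ n * a) := by
      have : (z : A × A).2 = -(x ^ (n - 1) * (z : A × A).1) := by linear_combination h2'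
      rw [this, ha, ← mul_assoc, mul_comm (x ^ (n - 1)) x, hx]
    refine Submodule.mem_comap.2 ((hB _).2 ⟨a, ?_⟩)
    show (z : A × A) = _
    exact Prod.ext ha hb
  have hsurj : Function.Surjective f := by
    rintro ⟨q, t⟩
    obtain ⟨a, rfl⟩ := Submodule.Quotient.mk_surjective _ q
    have ht : x * (t : A) = 0 := (hT _).1 t.2
    have hmem : ((a, (t : A) - x ^ (n - 1) * a) : A × A) ∈ Z := by
      rw [hZ]
      show x ^ n * a + x * ((t : A) - x ^ (n - 1) * a) = 0
      rw [mul_sub, ← mul_assoc, hx]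
      rw [mul_comm x (t:A)] at *
      linear_combination ht
    refine ⟨⟨_, hmem⟩, ?_⟩
    rw [hf]
    refine Prod.ext rfl (Subtype.ext ?_)
    show x ^ (n - 1) * a + ((t : A) - x ^ (n - 1) * a) = (t : A)
    ring
  let g := Submodule.liftQ _ f hle
  have hginj : Function.Injective g := by
    rw [← LinearMap.ker_eq_bot]
    exact Submodule.ker_liftQ_eq_bot _ _ _ hker
  have hgsurj : Function.Surjective g := by
    intro y
    obtain ⟨z, hz⟩ := hsurj y
    exact ⟨Submodule.Quotient.mk z, hz⟩
  exact ⟨LinearEquiv.ofBijective g ⟨hginj, hgsurj⟩⟩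
end
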